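/- For every τ in the upper half-plane ℍ, with all theta constants evaluated at (0,τ): θ[1;0]·θ[1;1/2]³ - θ[1;1/4]·θ[1;3/4]³ - θ[1;3/4]·θ[1;1/4]³ = 0. -/
import Mathlib


open Complex

/-- The theta function with characteristics `θ[ε; ε'](ζ, τ)`. -/
noncomputable def thetaChar (e e' : ℝ) (z τ : ℂ) : ℂ :=
  ∑' n : ℤ, Complex.exp (2 * Real.pi * I *
    ((1/2) * ((n : ℂ) + (e : ℂ)/2)^2 * τ + ((n : ℂ) + (e : ℂ)/2) * (z + (e' : ℂ)/2)))

/-- The derivative theta constant `θ'[ε; ε'](0, τ) = ∂θ[ε;ε'](ζ,τ)/∂ζ |_{ζ=0}`. -/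
noncomputable def thetaCharDeriv (e e' : ℝ) (τ : ℂ) : ℂ :=
  deriv (fun z => thetaChar e e' z τ) 0

/-! ### Auxiliary definitions -/

/-- Individual term of the theta series with characteristic `e` and phase parameter `μ`. -/
noncomputable def Tt (e μ : ℝ) (τ : ℂ) (n : ℤ) : ℂ :=
  Complex.exp (2 * Real.pi * I *
    ((1/2) * ((n : ℂ) + (e : ℂ)/2)^2 * τ + ((n : ℂ) + (e : ℂ)/2) * (μ : ℂ)))

/-- The theta series. -/
noncomputable def Fth (e μ : ℝ) (τ : ℂ) : ℂ := ∑' n : ℤ, Tt e μ τ n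

lemma Tt_eq_jacobi (e μ : ℝ) (τ : ℂ) (n : ℤ) :
    Tt e μ τ n = Complex.exp ((Real.pi : ℂ) * I * ((e:ℂ)^2/4 * τ + (e:ℂ)*(μ:ℂ))) *
      jacobiTheta₂_term n ((e:ℂ)*τ/2 + (μ:ℂ)) τ := by
  rw [Tt, jacobiTheta₂_term, ← Complex.exp_add]
  congr 1
  ring

lemma summable_norm_jacobi {τ : ℂ} (z : ℂ) (hτ : 0 < τ.im) :
    Summable fun n : ℤ => ‖jacobiTheta₂_term n z τ‖ := by
  refine (summable_pow_mul_jacobiTheta₂_term_bound |z.im| hτ 0).of_nonneg_of_le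
    (fun _ => norm_nonneg _) ?_
  simpa only [pow_zero, one_mul] using norm_jacobiTheta₂_term_le hτ le_rfl le_rfl

lemma summable_norm_Tt (e μ : ℝ) {τ : ℂ} (hτ : 0 < τ.im) :
    Summable fun n : ℤ => ‖Tt e μ τ n‖ := by
  simp_rw [Tt_eq_jacobi, norm_mul]
  exact (summable_norm_jacobi _ hτ).mul_left _

lemma hasSum_Tt (e μ : ℝ) {τ : ℂ} (hτ : 0 < τ.im) :
    HasSum (Tt e μ τ) (Fth e μ τ) :=
  ((summable_norm_Tt e μ hτ).of_norm).hasSum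

def evenSet : Set (ℤ × ℤ) := {p | Even (p.1 + p.2)}

def evenEquiv : (ℤ × ℤ) ≃ evenSet where
  toFun q := ⟨(q.1 + q.2, q.1 - q.2), ⟨q.1, by dsimp; ring⟩⟩
  invFun p := ((p.1.1 + p.1.2) / 2, (p.1.1 - p.1.2) / 2)
  left_inv q := by ext <;> dsimp <;> omega
  right_inv p := by
    obtain ⟨⟨m, n⟩, ⟨r, hr⟩⟩ := p
    ext <;> dsimp at * <;> omega

def oddEquiv : (ℤ × ℤ) ≃ (evenSetᶜ : Set (ℤ × ℤ)) where
  toFun q := ⟨(q.1 + q.2, q.1 - q.2 - 1), by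
    simp only [Set.mem_compl_iff, evenSet, Set.mem_setOf_eq, Int.even_iff]; omega⟩
  invFun p := ((p.1.1 + p.1.2 + 1) / 2, (p.1.1 - p.1.2 - 1) / 2)
  left_inv q := by ext <;> dsimp <;> omega
  right_inv p := by
    obtain ⟨⟨m, n⟩, hp⟩ := p
    simp only [Set.mem_compl_iff, evenSet, Set.mem_setOf_eq, Int.even_iff] at hp
    ext <;> dsimp at * <;> omega

lemma term_even (μ ν : ℝ) (τ : ℂ) (a b : ℤ) :
    Tt 1 μ τ (a + b) * Tt 1 ν τ (a - b) =
      Tt 1 (μ + ν) (2 * τ) a * Tt 0 (μ - ν) (2 * τ) b := by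
  simp only [Tt, ← Complex.exp_add]
  congr 1
  push_cast
  ring

lemma term_odd (μ ν : ℝ) (τ : ℂ) (a b : ℤ) :
    Tt 1 μ τ (a + b) * Tt 1 ν τ (a - b - 1) =
      Tt 0 (μ + ν) (2 * τ) a * Tt 1 (μ - ν) (2 * τ) b := by
  simp only [Tt, ← Complex.exp_add]
  congr 1
  push_cast
  ring

/-- The doubling product formula for theta series. -/
lemma prod_formula (μ ν : ℝ) {τ : ℂ} (hτ : 0 < τ.im) :
    Fth 1 μ τ * Fth 1 ν τ =
      Fth 1 (μ + ν) (2 * τ) * Fth 0 (μ - ν) (2 * τ)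
        + Fth 0 (μ + ν) (2 * τ) * Fth 1 (μ - ν) (2 * τ) := by
  have h2τ : 0 < (2 * τ).im := by
    have : (2 * τ).im = 2 * τ.im := by simp
    rw [this]; linarith
  set g : ℤ × ℤ → ℂ := fun p => Tt 1 μ τ p.1 * Tt 1 ν τ p.2 with hg_def
  have hg : HasSum g (Fth 1 μ τ * Fth 1 ν τ) :=
    (hasSum_Tt 1 μ hτ).mul (hasSum_Tt 1 ν hτ)
      (summable_mul_of_summable_norm (summable_norm_Tt 1 μ hτ) (summable_norm_Tt 1 ν hτ))
  have heven : HasSum (g ∘ (Subtype.val : evenSet → ℤ × ℤ))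
      (Fth 1 (μ + ν) (2 * τ) * Fth 0 (μ - ν) (2 * τ)) := by
    rw [← Equiv.hasSum_iff evenEquiv]
    have : (g ∘ Subtype.val) ∘ evenEquiv =
        fun q : ℤ × ℤ => Tt 1 (μ + ν) (2 * τ) q.1 * Tt 0 (μ - ν) (2 * τ) q.2 := by
      funext q
      exact (term_even μ ν τ q.1 q.2)
    rw [this]
    exact (hasSum_Tt 1 (μ + ν) h2τ).mul (hasSum_Tt 0 (μ - ν) h2τ)
      (summable_mul_of_summable_norm (summable_norm_Tt _ _ h2τ) (summable_norm_Tt _ _ h2τ))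
  have hodd : HasSum (g ∘ (Subtype.val : (evenSetᶜ : Set (ℤ × ℤ)) → ℤ × ℤ))
      (Fth 0 (μ + ν) (2 * τ) * Fth 1 (μ - ν) (2 * τ)) := by
    rw [← Equiv.hasSum_iff oddEquiv]
    have : (g ∘ Subtype.val) ∘ oddEquiv =
        fun q : ℤ × ℤ => Tt 0 (μ + ν) (2 * τ) q.1 * Tt 1 (μ - ν) (2 * τ) q.2 := by
      funext q
      exact (term_odd μ ν τ q.1 q.2)
    rw [this]
    exact (hasSum_Tt 0 (μ + ν) h2τ).mul (hasSum_Tt 1 (μ - ν) h2τ)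
      (summable_mul_of_summable_norm (summable_norm_Tt _ _ h2τ) (summable_norm_Tt _ _ h2τ))
  exact hg.unique (heven.add_compl hodd)

lemma Fth_one_half (σ : ℂ) : Fth 1 (1/2) σ = 0 := by
  have key : ∀ n : ℤ, Tt 1 (1/2) σ (-1 - n) = -Tt 1 (1/2) σ n := by
    intro n
    have h : Tt 1 (1/2) σ (-1 - n) = Tt 1 (1/2) σ n * Complex.exp ((Real.pi : ℂ) * I)
        * Complex.exp (((-(n+1) : ℤ) : ℂ) * (2 * (Real.pi : ℂ) * I)) := by
      rw [Tt, Tt, ← Complex.exp_add, ← Complex.exp_add]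
      congr 1
      push_cast
      ring
    rw [h, Complex.exp_int_mul_two_pi_mul_I, Complex.exp_pi_mul_I]
    ring
  have h1 : Fth 1 (1/2) σ = ∑' n : ℤ, Tt 1 (1/2) σ ((Equiv.subLeft (-1 : ℤ)) n) :=
    ((Equiv.subLeft (-1 : ℤ)).tsum_eq _).symm
  have h2 : ∑' n : ℤ, Tt 1 (1/2) σ ((Equiv.subLeft (-1 : ℤ)) n) = -Fth 1 (1/2) σ := by
    have h0 : (fun n : ℤ => Tt 1 (1/2) σ ((Equiv.subLeft (-1 : ℤ)) n))
        = fun n : ℤ => -(Tt 1 (1/2) σ n) := by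
      funext n
      simpa only [Equiv.subLeft_apply] using key n
    rw [h0, tsum_neg]
    rfl
  have h3 : (2 : ℂ) * Fth 1 (1/2) σ = 0 := by linear_combination h1.trans h2
  simpa using h3

lemma Fth_zero_neg (μ : ℝ) (σ : ℂ) : Fth 0 (-μ) σ = Fth 0 μ σ := by
  have h0 : (fun n : ℤ => Tt 0 (-μ) σ n) = fun n : ℤ => Tt 0 μ σ ((Equiv.neg ℤ) n) := by
    funext n
    simp only [Equiv.neg_apply]
    rw [Tt, Tt]
    congr 1
    push_cast
    ring
  show ∑' n : ℤ, Tt 0 (-μ) σ n = _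
  rw [h0, (Equiv.neg ℤ).tsum_eq]
  rfl

lemma Fth_zero_add_one (μ : ℝ) (σ : ℂ) : Fth 0 (μ + 1) σ = Fth 0 μ σ := by
  apply tsum_congr
  intro n
  have h : Tt 0 (μ + 1) σ n = Tt 0 μ σ n
      * Complex.exp (((n : ℤ) : ℂ) * (2 * (Real.pi : ℂ) * I)) := by
    rw [Tt, Tt, ← Complex.exp_add]
    congr 1
    push_cast
    ring
  rw [h, Complex.exp_int_mul_two_pi_mul_I, mul_one]

lemma Fth_one_neg (μ : ℝ) (σ : ℂ) : Fth 1 (-μ) σ = Fth 1 μ σ := by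
  have h0 : (fun n : ℤ => Tt 1 (-μ) σ n)
      = fun n : ℤ => Tt 1 μ σ ((Equiv.subLeft (-1 : ℤ)) n) := by
    funext n
    simp only [Equiv.subLeft_apply]
    rw [Tt, Tt]
    congr 1
    push_cast
    ring
  show ∑' n : ℤ, Tt 1 (-μ) σ n = _
  rw [h0, (Equiv.subLeft (-1 : ℤ)).tsum_eq]
  rfl

lemma Fth_one_add_one (μ : ℝ) (σ : ℂ) : Fth 1 (μ + 1) σ = -Fth 1 μ σ := by
  have h2 : -Fth 1 μ σ = ∑' n : ℤ, -(Tt 1 μ σ n) := tsum_neg.symm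
  rw [h2]
  apply tsum_congr
  intro n
  have h : Tt 1 (μ + 1) σ n = Tt 1 μ σ n * Complex.exp ((Real.pi : ℂ) * I)
      * Complex.exp (((n : ℤ) : ℂ) * (2 * (Real.pi : ℂ) * I)) := by
    rw [Tt, Tt, ← Complex.exp_add, ← Complex.exp_add]
    congr 1
    push_cast
    ring
  rw [h, Complex.exp_int_mul_two_pi_mul_I, Complex.exp_pi_mul_I]
  ring

lemma Fth_zero_34 (σ : ℂ) : Fth 0 (3/4) σ = Fth 0 (1/4) σ := by
  have h1 : (3/4 : ℝ) = -(1/4) + 1 := by norm_num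
  rw [h1, Fth_zero_add_one, Fth_zero_neg]

lemma Fth_one_34 (σ : ℂ) : Fth 1 (3/4) σ = -Fth 1 (1/4) σ := by
  have h1 : (3/4 : ℝ) = -(1/4) + 1 := by norm_num
  rw [h1, Fth_one_add_one, Fth_one_neg]

lemma thetaChar_eq_Fth (e e' : ℝ) (τ : ℂ) : thetaChar e e' 0 τ = Fth e (e'/2) τ := by
  apply tsum_congr
  intro n
  rw [Tt]
  congr 1
  push_cast
  ring

theorem theta_constant_identity_one (τ : ℂ) (hτ : 0 < τ.im) :
    thetaChar 1 0 0 τ * thetaChar 1 (1/2) 0 τ ^ 3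
      - thetaChar 1 (1/4) 0 τ * thetaChar 1 (3/4) 0 τ ^ 3
      - thetaChar 1 (3/4) 0 τ * thetaChar 1 (1/4) 0 τ ^ 3 = 0 := by
  have hA : thetaChar 1 0 0 τ = Fth 1 0 τ := by rw [thetaChar_eq_Fth]; norm_num
  have hB : thetaChar 1 (1/2) 0 τ = Fth 1 (1/4) τ := by rw [thetaChar_eq_Fth]; norm_num
  have hC : thetaChar 1 (1/4) 0 τ = Fth 1 (1/8) τ := by rw [thetaChar_eq_Fth]; norm_num
  have hD : thetaChar 1 (3/4) 0 τ = Fth 1 (3/8) τ := by rw [thetaChar_eq_Fth]; norm_num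
  rw [hA, hB, hC, hD]
  have pAB := prod_formula (1/4) 0 hτ
  have pBB := prod_formula (1/4) (1/4) hτ
  have pCD := prod_formula (3/8) (1/8) hτ
  have pCC := prod_formula (1/8) (1/8) hτ
  have pDD := prod_formula (3/8) (3/8) hτ
  norm_num at pAB pBB pCD pCC pDD
  rw [Fth_one_half] at pBB pCD
  rw [Fth_one_34, Fth_zero_34] at pDD
  set FA := Fth 1 0 τ
  set FB := Fth 1 (1/4) τ
  set FC := Fth 1 (1/8) τ
  set FD := Fth 1 (3/8) τ
  set a := Fth 0 (1/4) (2*τ)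
  set b := Fth 1 (1/4) (2*τ)
  set c := Fth 0 (1/2) (2*τ)
  set d := Fth 1 0 (2*τ)
  set e0 := Fth 0 0 (2*τ)
  linear_combination (FB^2) * pAB + (2*a*b) * pBB - (FC^2 + FD^2) * pCD
    - (c*b) * pCC - (c*b) * pDD
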